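/- arXiv:2408.13921 — 3 statements merged into one kernel-verified Lean document; each statement's English description precedes it below -/
import Mathlib

section
/- Let (f,A) be a continuous GL(d,ℝ)-cocycle over a homeomorphism f of a compact metric space X. Suppose x ∈ QC⁺(A,κ), i.e., ‖A_n(x)‖·‖A_n(x)⁻¹‖ ≤ κ for all n ∈ ℕ. Then for every y in the ω-limit set of x and for every integer n ∈ ℤ (both positive and negative), ‖A_n(y)‖·‖A_n(y)⁻¹‖ ≤ κ². -/
open Matrix

attribute [local instance] Matrix.linftyOpNormedAddCommGroup Matrix.linftyOpNormedRing

/-- The cocycle product `A_n(x) = A(f^{n-1}(x)) ⋯ A(f(x)) A(x)`. -/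
noncomputable def prodN {X : Type*} {d : ℕ} (f : X → X) (A : X → GL (Fin d) ℝ) :
    ℕ → X → GL (Fin d) ℝ
  | 0, _ => 1
  | n + 1, x => prodN f A n (f x) * A x

/-- The two-sided cocycle product: `A_n(x)` for `n ≥ 0` and
`A_{-n}(x) = (A_n(f^{-n}(x)))⁻¹` for `n ≥ 1`. -/
noncomputable def prodZ {X : Type*} [TopologicalSpace X] {d : ℕ} (f : X ≃ₜ X) (A : X → GL (Fin d) ℝ) :
    ℤ → X → GL (Fin d) ℝ
  | Int.ofNat n, x => prodN (⇑f) A n x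
  | Int.negSucc n, x => (prodN (⇑f) A (n + 1) ((⇑f.symm)^[n + 1] x))⁻¹

private lemma prodN_add {X : Type*} {d : ℕ} (f : X → X) (A : X → GL (Fin d) ℝ)
    (a b : ℕ) (x : X) : prodN f A (a + b) x = prodN f A a (f^[b] x) * prodN f A b x := by
  induction b generalizing x with
  | zero => simp [prodN]
  | succ b ih =>
    have h : a + (b + 1) = (a + b) + 1 := by ring
    rw [h]
    show prodN f A (a + b) (f x) * A x = _
    rw [ih (f x)]
    simp [prodN, mul_assoc, Function.iterate_succ_apply]

private lemma symm_iter {X : Type*} [TopologicalSpace X] (f : X ≃ₜ X) (a m : ℕ) (h : a ≤ m)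
    (x : X) : (⇑f.symm)^[a] ((⇑f)^[m] x) = (⇑f)^[m - a] x := by
  have h2 : (⇑f)^[m] x = (⇑f)^[a] ((⇑f)^[m - a] x) := by
    rw [← Function.iterate_add_apply]
    congr 1
    omega
  rw [h2]
  exact (Function.LeftInverse.iterate f.symm_apply_apply a) _

private lemma prodZ_iter {X : Type*} [TopologicalSpace X] {d : ℕ} (f : X ≃ₜ X)
    (A : X → GL (Fin d) ℝ) (n : ℤ) (m : ℕ) (h : 0 ≤ (m : ℤ) + n) (x : X) :
    prodZ f A n ((⇑f)^[m] x) =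
      prodN (⇑f) A ((m : ℤ) + n).toNat x * (prodN (⇑f) A m x)⁻¹ := by
  cases n with
  | ofNat k =>
    show prodN (⇑f) A k ((⇑f)^[m] x) = _
    have ht : ((m : ℤ) + Int.ofNat k).toNat = k + m := by simp [Int.ofNat_eq_coe]; omega
    rw [ht, prodN_add]
    group
  | negSucc k =>
    rw [Int.negSucc_eq] at h
    have hk : k + 1 ≤ m := by omega
    show (prodN (⇑f) A (k + 1) ((⇑f.symm)^[k + 1] ((⇑f)^[m] x)))⁻¹ = _
    rw [symm_iter f (k+1) m hk]
    have ht : ((m : ℤ) + Int.negSucc k).toNat = m - (k + 1) := by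
      rw [Int.negSucc_eq]; omega
    have hm : (k + 1) + (m - (k + 1)) = m := by omega
    have h3 := prodN_add (⇑f) A (k + 1) (m - (k + 1)) x
    rw [hm] at h3
    rw [ht, show prodN (⇑f) A (k+1) ((⇑f)^[m - (k+1)] x)
        = prodN (⇑f) A m x * (prodN (⇑f) A (m - (k+1)) x)⁻¹ by rw [h3]; group]
    group

private lemma prodN_cont {X : Type*} [TopologicalSpace X] {d : ℕ} (f : X ≃ₜ X)
    (A : X → GL (Fin d) ℝ) (hA : Continuous fun x => (A x : Matrix (Fin d) (Fin d) ℝ)) (n : ℕ) :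
    Continuous fun x => (prodN (⇑f) A n x : Matrix (Fin d) (Fin d) ℝ) := by
  induction n with
  | zero => exact continuous_const
  | succ n ih => exact (ih.comp f.continuous).mul hA

private lemma prodN_inv_cont {X : Type*} [TopologicalSpace X] {d : ℕ} (f : X ≃ₜ X)
    (A : X → GL (Fin d) ℝ) (hA : Continuous fun x => (A x : Matrix (Fin d) (Fin d) ℝ)) (n : ℕ) :
    Continuous fun x => (((prodN (⇑f) A n x)⁻¹ : GL (Fin d) ℝ) : Matrix (Fin d) (Fin d) ℝ) := by
  haveI : CompleteSpace (Matrix (Fin d) (Fin d) ℝ) := by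
    have := Matrix.linftyOpNormedAlgebra (n := Fin d) (R := ℝ) (α := ℝ)
    exact FiniteDimensional.complete ℝ _
  haveI : HasSummableGeomSeries (Matrix (Fin d) (Fin d) ℝ) := by
    letI := Matrix.linftyOpNormedAlgebra (n := Fin d) (R := ℝ) (α := ℝ)
    haveI : CompleteSpace (Matrix (Fin d) (Fin d) ℝ) := FiniteDimensional.complete ℝ _
    infer_instance
  have h : (fun x => (((prodN (⇑f) A n x)⁻¹ : GL (Fin d) ℝ) : Matrix (Fin d) (Fin d) ℝ))
      = fun x => Ring.inverse ((prodN (⇑f) A n x : Matrix (Fin d) (Fin d) ℝ)) := by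
    funext x; exact (Ring.inverse_unit _).symm
  rw [h]
  apply continuous_iff_continuousAt.mpr
  intro z
  exact ContinuousAt.comp (g := Ring.inverse)
    (NormedRing.inverse_continuousAt (prodN (⇑f) A n z))
    (prodN_cont f A hA n).continuousAt

private lemma prodZ_cont {X : Type*} [TopologicalSpace X] {d : ℕ} (f : X ≃ₜ X)
    (A : X → GL (Fin d) ℝ) (hA : Continuous fun x => (A x : Matrix (Fin d) (Fin d) ℝ)) (n : ℤ) :
    Continuous (fun z => ‖(prodZ f A n z : Matrix (Fin d) (Fin d) ℝ)‖ *
        ‖(((prodZ f A n z)⁻¹ : GL (Fin d) ℝ) : Matrix (Fin d) (Fin d) ℝ)‖) := by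
  cases n with
  | ofNat k =>
    exact ((prodN_cont f A hA k).norm).mul ((prodN_inv_cont f A hA k).norm)
  | negSucc k =>
    have hit : Continuous fun z : X => (⇑f.symm)^[k+1] z := by
      exact (f.symm.continuous.iterate (k+1))
    have h1 : Continuous fun z =>
        ((prodZ f A (Int.negSucc k) z : GL (Fin d) ℝ) : Matrix (Fin d) (Fin d) ℝ) := by
      show Continuous fun z =>
        (((prodN (⇑f) A (k + 1) ((⇑f.symm)^[k + 1] z))⁻¹ : GL (Fin d) ℝ) : Matrix (Fin d) (Fin d) ℝ)
      exact (prodN_inv_cont f A hA (k+1)).comp hit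
    have h2 : Continuous fun z =>
        (((prodZ f A (Int.negSucc k) z)⁻¹ : GL (Fin d) ℝ) : Matrix (Fin d) (Fin d) ℝ) := by
      show Continuous fun z =>
        ((((prodN (⇑f) A (k + 1) ((⇑f.symm)^[k + 1] z))⁻¹)⁻¹ : GL (Fin d) ℝ) : Matrix (Fin d) (Fin d) ℝ)
      simp only [inv_inv]
      exact (prodN_cont f A hA (k+1)).comp hit
    exact h1.norm.mul h2.norm

/-- if `x ∈ QC⁺(A,κ)`, then for every `y` in the ω-limit set of `x`
(i.e., a limit of `f^[n_j] x` along a strictly monotone sequence) and every `n : ℤ`,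
`‖A_n(y)‖·‖A_n(y)⁻¹‖ ≤ κ²`. -/
theorem qc_omega_limit
    {X : Type*} [MetricSpace X] [CompactSpace X] {d : ℕ}
    (f : X ≃ₜ X) (A : X → GL (Fin d) ℝ)
    (hA : Continuous fun x => (A x : Matrix (Fin d) (Fin d) ℝ))
    (κ : ℝ) (hκ : 1 ≤ κ) (x : X)
    (hx : ∀ n : ℕ,
      ‖(prodN (⇑f) A n x : Matrix (Fin d) (Fin d) ℝ)‖ *
        ‖(((prodN (⇑f) A n x)⁻¹ : GL (Fin d) ℝ) : Matrix (Fin d) (Fin d) ℝ)‖ ≤ κ)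
    (y : X)
    (hy : ∃ nj : ℕ → ℕ, StrictMono nj ∧
      Filter.Tendsto (fun j => (⇑f)^[nj j] x) Filter.atTop (nhds y)) :
    ∀ n : ℤ,
      ‖(prodZ f A n y : Matrix (Fin d) (Fin d) ℝ)‖ *
        ‖(((prodZ f A n y)⁻¹ : GL (Fin d) ℝ) : Matrix (Fin d) (Fin d) ℝ)‖ ≤ κ ^ 2 := by
  intro n
  obtain ⟨nj, hmono, hlim⟩ := hy
  set g : X → ℝ := fun z => ‖(prodZ f A n z : Matrix (Fin d) (Fin d) ℝ)‖ *
        ‖(((prodZ f A n z)⁻¹ : GL (Fin d) ℝ) : Matrix (Fin d) (Fin d) ℝ)‖ with hg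
  have hgc : Continuous g := prodZ_cont f A hA n
  have htend : Filter.Tendsto (fun j => g ((⇑f)^[nj j] x)) Filter.atTop (nhds (g y)) :=
    (hgc.continuousAt.tendsto).comp hlim
  refine le_of_tendsto htend ?_
  filter_upwards [Filter.eventually_ge_atTop ((-n).toNat)] with j hj
  have hmj : (-n).toNat ≤ nj j := le_trans hj (hmono.le_apply)
  have hpos : 0 ≤ (nj j : ℤ) + n := by
    have := Int.self_le_toNat (-n)
    omega
  set m := nj j
  set a := ((m : ℤ) + n).toNat
  have key := prodZ_iter f A n m hpos x
  set C := prodN (⇑f) A a x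
  set B := prodN (⇑f) A m x
  have h1 : ‖(prodZ f A n ((⇑f)^[m] x) : Matrix (Fin d) (Fin d) ℝ)‖
      ≤ ‖(C : Matrix (Fin d) (Fin d) ℝ)‖ * ‖((B⁻¹ : GL (Fin d) ℝ) : Matrix (Fin d) (Fin d) ℝ)‖ := by
    rw [key, Units.val_mul]
    exact norm_mul_le _ _
  have h2 : ‖(((prodZ f A n ((⇑f)^[m] x))⁻¹ : GL (Fin d) ℝ) : Matrix (Fin d) (Fin d) ℝ)‖
      ≤ ‖(B : Matrix (Fin d) (Fin d) ℝ)‖ * ‖((C⁻¹ : GL (Fin d) ℝ) : Matrix (Fin d) (Fin d) ℝ)‖ := by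
    rw [key, _root_.mul_inv_rev, _root_.inv_inv, Units.val_mul]
    exact norm_mul_le _ _
  have hC := hx a
  have hB := hx m
  have hgj : g ((⇑f)^[m] x) ≤ κ ^ 2 := by
    calc g ((⇑f)^[m] x)
        ≤ (‖(C : Matrix (Fin d) (Fin d) ℝ)‖ * ‖((B⁻¹ : GL (Fin d) ℝ) : Matrix (Fin d) (Fin d) ℝ)‖) *
          (‖(B : Matrix (Fin d) (Fin d) ℝ)‖ * ‖((C⁻¹ : GL (Fin d) ℝ) : Matrix (Fin d) (Fin d) ℝ)‖) :=
        mul_le_mul h1 h2 (norm_nonneg _) (by positivity)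
      _ = (‖(C : Matrix (Fin d) (Fin d) ℝ)‖ * ‖((C⁻¹ : GL (Fin d) ℝ) : Matrix (Fin d) (Fin d) ℝ)‖) *
          (‖(B : Matrix (Fin d) (Fin d) ℝ)‖ * ‖((B⁻¹ : GL (Fin d) ℝ) : Matrix (Fin d) (Fin d) ℝ)‖) := by
        ring
      _ ≤ κ * κ := mul_le_mul hC hB (by positivity) (by linarith)
      _ = κ ^ 2 := (sq κ).symm
  exact hgj
end

section
/- Let d > 2. For every matrix H ∈ SL(d,ℝ) there exists a C^∞ curve H_t : [0,1] → SL(d,ℝ) with H₀ = Id such that for every t ∈ (0,1], the matrix H·H_t is hyperbolic (has no eigenvalue of modulus 1). -/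
open Matrix

attribute [local instance] Matrix.linftyOpNormedAddCommGroup Matrix.linftyOpNormedRing Matrix.linftyOpNormedAlgebra

/-- A real matrix is hyperbolic if none of its complex eigenvalues (roots of the
characteristic polynomial over `ℂ`) has absolute value `1`. -/
def IsHyperbolic {d : ℕ} (M : Matrix (Fin d) (Fin d) ℝ) : Prop :=
  ∀ μ : ℂ, (Matrix.charpoly (M.map (Complex.ofReal))).IsRoot μ → ‖μ‖ ≠ 1

open Polynomial
open scoped Kronecker

namespace SmoothHyperbolicAux


variable {d : ℕ}

/- ### Part 1: eigenvalue lemmas over ℂ -/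

lemma exists_eigenvector {n : ℕ} (M : Matrix (Fin n) (Fin n) ℂ) (μ : ℂ)
    (h : M.charpoly.IsRoot μ) : ∃ u ≠ 0, M.mulVec u = μ • u := by
  have h1 : (μ • (1 : Matrix (Fin n) (Fin n) ℂ) - M).det = 0 := by
    have := h.eq_zero
    rw [Matrix.charpoly, ← Polynomial.coe_evalRingHom, RingHom.map_det] at this
    convert this using 2
    ext i j
    by_cases hij : i = j <;>
      simp [charmatrix_apply, hij, Matrix.one_apply, Matrix.map_apply, Matrix.sub_apply,
        Matrix.smul_apply]
  obtain ⟨u, hu, hmu⟩ := (Matrix.exists_mulVec_eq_zero_iff).mpr h1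
  refine ⟨u, hu, ?_⟩
  rw [Matrix.sub_mulVec, sub_eq_zero, Matrix.smul_mulVec, Matrix.one_mulVec] at hmu
  exact hmu.symm

lemma kron_det_zero {n : ℕ} (A : Matrix (Fin n) (Fin n) ℂ) (μ ν : ℂ)
    (hμ : A.charpoly.IsRoot μ) (hν : A.charpoly.IsRoot ν) (hμν : μ * ν = 1) :
    (A ⊗ₖ A - 1).det = 0 := by
  obtain ⟨u, hu, hAu⟩ := exists_eigenvector A μ hμ
  obtain ⟨v, hv, hAv⟩ := exists_eigenvector A ν hν
  rw [← Matrix.exists_mulVec_eq_zero_iff]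
  refine ⟨fun p => u p.1 * v p.2, ?_, ?_⟩
  · obtain ⟨i, hi⟩ := Function.ne_iff.mp hu
    obtain ⟨j, hj⟩ := Function.ne_iff.mp hv
    exact Function.ne_iff.mpr ⟨(i, j), mul_ne_zero hi hj⟩
  · ext ⟨i, j⟩
    have h1 : ((A ⊗ₖ A).mulVec fun p => u p.1 * v p.2) (i, j)
        = (A.mulVec u i) * (A.mulVec v j) := by
      simp only [Matrix.mulVec, dotProduct, Fintype.sum_prod_type,
        Matrix.kroneckerMap_apply]
      rw [Finset.sum_mul_sum]
      apply Finset.sum_congr rfl; intro k _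
      apply Finset.sum_congr rfl; intro l _
      ring
    simp only [Matrix.sub_mulVec, Pi.sub_apply, h1, Matrix.one_mulVec, hAu, hAv,
      Pi.zero_apply, Pi.smul_apply, smul_eq_mul]
    rw [show μ * u i * (ν * v j) = (μ * ν) * (u i * v j) by ring, hμν]
    ring

/- ### Part 2: transvection paths -/

noncomputable def tpoly (L : List (TransvectionStruct (Fin d) ℝ)) :
    Matrix (Fin d) (Fin d) ℝ[X] :=
  (L.map fun ts => transvection ts.i ts.j (X * C ts.c)).prod

noncomputable def tpath (L : List (TransvectionStruct (Fin d) ℝ)) (t : ℝ) :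
    Matrix (Fin d) (Fin d) ℝ :=
  (L.map fun ts => transvection ts.i ts.j (t * ts.c)).prod

lemma transvection_map {R S : Type*} [CommRing R] [CommRing S] (f : R →+* S)
    (i j : Fin d) (c : R) :
    (transvection i j c).map f = transvection i j (f c) := by
  ext a b
  simp [transvection, Matrix.map_apply, Matrix.add_apply, Matrix.one_apply,
    Matrix.single, apply_ite f]

lemma tpoly_map_eval (L : List (TransvectionStruct (Fin d) ℝ)) (t : ℝ) :
    (tpoly L).map (eval t) = tpath L t := by
  induction L with
  | nil => simp [tpoly, tpath, Matrix.map_one]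
  | cons x L ih =>
    simp only [tpoly, tpath, List.map_cons, List.prod_cons] at *
    rw [show ∀ (A B : Matrix (Fin d) (Fin d) ℝ[X]), (A * B).map (eval t)
        = A.map (eval t) * B.map (eval t) from fun A B =>
          RingHom.map_mul (RingHom.mapMatrix (evalRingHom t)) A B,
      ih]
    congr 1
    rw [← coe_evalRingHom, transvection_map (evalRingHom t)]
    simp only [coe_evalRingHom, eval_mul, eval_C, eval_X, mul_comm]

lemma tpath_zero (L : List (TransvectionStruct (Fin d) ℝ)) : tpath L 0 = 1 := by
  rw [tpath]
  apply List.prod_eq_one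
  intro x hx
  simp only [List.mem_map] at hx
  obtain ⟨ts, -, rfl⟩ := hx
  simp

lemma tpath_one (L : List (TransvectionStruct (Fin d) ℝ)) :
    tpath L 1 = (L.map TransvectionStruct.toMatrix).prod := by
  simp only [tpath, one_mul]
  rfl

lemma tpath_det (L : List (TransvectionStruct (Fin d) ℝ)) (t : ℝ) :
    (tpath L t).det = 1 := by
  induction L with
  | nil => simp [tpath]
  | cons x L ih =>
    simp only [tpath, List.map_cons, List.prod_cons, det_mul] at *
    rw [ih, det_transvection_of_ne _ _ x.hij, one_mul]

lemma tpath_contDiff (L : List (TransvectionStruct (Fin d) ℝ)) :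
    ContDiff ℝ (⊤ : ℕ∞) (tpath L) := by
  induction L with
  | nil =>
    have he : tpath ([] : List (TransvectionStruct (Fin d) ℝ))
        = fun _ => (1 : Matrix (Fin d) (Fin d) ℝ) := rfl
    rw [he]
    exact contDiff_const
  | cons x L ih =>
    have he : tpath (x :: L) = fun t => transvection x.i x.j (t * x.c) * tpath L t := by
      funext t; rfl
    rw [he]
    apply ContDiff.mul ?_ ih
    have : (fun t : ℝ => transvection x.i x.j (t * x.c))
        = fun t : ℝ => (1 : Matrix (Fin d) (Fin d) ℝ)
          + (t * x.c) • Matrix.single x.i x.j (1 : ℝ) := by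
      funext t
      rw [transvection, smul_single, smul_eq_mul, mul_one]
    rw [this]
    exact contDiff_const.add ((contDiff_id.mul contDiff_const).smul contDiff_const)

/- ### Part 3: every determinant-one matrix is a product of transvections -/

lemma diag_two_eq (i j : Fin d) (hij : i ≠ j) (c : ℝ) :
    diagonal (fun k => if k = i then c else if k = j then c⁻¹ else 1)
      = 1 + (c - 1) • Matrix.single i i (1:ℝ) + (c⁻¹ - 1) • Matrix.single j j (1:ℝ) := by
  ext a b
  simp only [diagonal_apply, Matrix.add_apply, Matrix.one_apply, Matrix.smul_apply,
    Matrix.single, Matrix.of_apply, smul_eq_mul, mul_ite, mul_one, mul_zero]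
  by_cases hab : a = b
  · subst hab
    by_cases hai : a = i
    · subst hai
      simp [hij, Ne.symm hij]
    · by_cases haj : a = j
      · subst haj
        simp [hai, Ne.symm hai, hij, Ne.symm hij]
      · simp [hai, haj, Ne.symm hai, Ne.symm haj]
  · by_cases h1 : i = a ∧ i = b
    · exact absurd (h1.1.symm.trans h1.2) hab
    · by_cases h2 : j = a ∧ j = b
      · exact absurd (h2.1.symm.trans h2.2) hab
      · simp [h1, h2, hab, Ne.symm hab]

lemma six_transvections (i j : Fin d) (hij : i ≠ j) (c : ℝ) (hc : c ≠ 0) :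
    transvection i j c * (transvection j i (-c⁻¹) * (transvection i j c *
      (transvection i j (-1) * (transvection j i (1:ℝ) * transvection i j (-1)))))
      = diagonal (fun k => if k = i then c else if k = j then c⁻¹ else 1) := by
  set A := Matrix.single i j (1:ℝ) with hA
  set B := Matrix.single j i (1:ℝ) with hB
  set P := Matrix.single i i (1:ℝ) with hP
  set Q := Matrix.single j j (1:ℝ) with hQ
  have tv : ∀ r : ℝ, transvection i j r = 1 + r • A := by
    intro r; rw [transvection, hA, smul_single, smul_eq_mul, mul_one]
  have tv' : ∀ r : ℝ, transvection j i r = 1 + r • B := by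
    intro r; rw [transvection, hB, smul_single, smul_eq_mul, mul_one]
  have AA : A * A = 0 := by
    rw [hA]; exact Matrix.single_mul_single_of_ne (h := (Ne.symm hij)) ..
  have BB : B * B = 0 := by rw [hB]; exact Matrix.single_mul_single_of_ne (h := hij) ..
  have AB : A * B = P := by rw [hA, hB, hP, Matrix.single_mul_single_same, mul_one]
  have BA : B * A = Q := by rw [hA, hB, hQ, Matrix.single_mul_single_same, mul_one]
  have PA : P * A = A := by rw [hA, hP, Matrix.single_mul_single_same, one_mul]
  have AQ : A * Q = A := by rw [hA, hQ, Matrix.single_mul_single_same, mul_one]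
  have QB : Q * B = B := by rw [hB, hQ, Matrix.single_mul_single_same, one_mul]
  have BP : B * P = B := by rw [hB, hP, Matrix.single_mul_single_same, mul_one]
  have PP : P * P = P := by rw [hP, Matrix.single_mul_single_same, mul_one]
  have QQ : Q * Q = Q := by rw [hQ, Matrix.single_mul_single_same, mul_one]
  have PQ : P * Q = 0 := by rw [hP, hQ]; exact Matrix.single_mul_single_of_ne (h := hij) ..
  have QP : Q * P = 0 := by
    rw [hP, hQ]; exact Matrix.single_mul_single_of_ne (h := (Ne.symm hij)) ..
  have AP : A * P = 0 := by
    rw [hA, hP]; exact Matrix.single_mul_single_of_ne (h := (Ne.symm hij)) ..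
  have PB : P * B = 0 := by rw [hB, hP]; exact Matrix.single_mul_single_of_ne (h := hij) ..
  have BQ : B * Q = 0 := by rw [hB, hQ]; exact Matrix.single_mul_single_of_ne (h := hij) ..
  have QA : Q * A = 0 := by
    rw [hA, hQ]; exact Matrix.single_mul_single_of_ne (h := (Ne.symm hij)) ..
  rw [diag_two_eq i j hij c]
  simp only [tv, tv']
  simp only [mul_add, add_mul, mul_one, one_mul, smul_mul_assoc, mul_smul_comm, smul_smul,
    AA, BB, AB, BA, PA, AQ, QB, BP, PP, QQ, PQ, QP, AP, PB, BQ, QA, smul_zero, add_zero,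
    zero_add, mul_zero, zero_mul]
  have hcc : c⁻¹ * c = 1 := inv_mul_cancel₀ hc
  have hcc' : c * c⁻¹ = 1 := mul_inv_cancel₀ hc
  match_scalars <;> field_simp <;> ring

lemma diag_decomp (s : Finset (Fin d)) : ∀ (D : Fin d → ℝ), (∀ k ∉ s, D k = 1) →
    ∏ k, D k = 1 →
    ∃ L : List (TransvectionStruct (Fin d) ℝ),
      (L.map TransvectionStruct.toMatrix).prod = diagonal D := by
  induction s using Finset.strongInduction with
  | _ s IH =>
    intro D hs hprod
    by_cases hall : ∀ k ∈ s, D k = 1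
    · refine ⟨[], ?_⟩
      have : D = fun _ => 1 := by
        funext k
        by_cases hk : k ∈ s
        · exact hall k hk
        · exact hs k hk
      simp [this, diagonal_one]
    · push_neg at hall
      obtain ⟨i, his, hDi⟩ := hall
      have hne0 : ∀ k, D k ≠ 0 := by
        intro k
        have := hprod
        exact fun h => by
          rw [Finset.prod_eq_zero (Finset.mem_univ k) h] at this
          exact zero_ne_one this
      have hex : ∃ j, j ≠ i ∧ D j ≠ 1 := by
        by_contra hcon
        push_neg at hcon
        have : ∏ k, D k = D i := by
          apply Finset.prod_eq_single
          · intro b _ hb; exact hcon b hb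
          · intro h; exact absurd (Finset.mem_univ i) h
        exact hDi (by rw [← this, hprod])
      obtain ⟨j, hji, hDj⟩ := hex
      have hjs : j ∈ s := by
        by_contra hc
        exact hDj (hs j hc)
      set v : Fin d → ℝ := fun k => if k = i then D i else if k = j then (D i)⁻¹ else 1
        with hv
      set D' : Fin d → ℝ := fun k => if k = i then 1 else if k = j then D i * D j else D k
        with hD'
      have hpoint : ∀ k, D k = v k * D' k := by
        intro k
        by_cases hki : k = i
        · subst hki; simp [hv, hD', hji.symm]
        · by_cases hkj : k = j
          · subst hkj
            simp only [hv, hD', if_neg hki, if_pos rfl, if_true, eq_self_iff_true]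
            rw [inv_mul_cancel_left₀ (hne0 i)]
          · simp [hv, hD', hki, hkj]
      have hprodv : ∏ k, v k = 1 := by
        rw [← Finset.mul_prod_erase Finset.univ v (Finset.mem_univ i),
          ← Finset.mul_prod_erase _ v (Finset.mem_erase.mpr ⟨hji, Finset.mem_univ j⟩)]
        have h1 : v i = D i := by simp [hv]
        have h2 : v j = (D i)⁻¹ := by simp [hv, hji]
        rw [h1, h2, Finset.prod_eq_one, mul_one, mul_inv_cancel₀ (hne0 i)]
        intro k hk
        simp only [Finset.mem_erase] at hk
        simp [hv, hk.1, hk.2.1]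
      have hprodD' : ∏ k, D' k = 1 := by
        have h1 : ∏ k, (v k * D' k) = 1 := by
          rw [← Finset.prod_congr rfl fun k _ => (hpoint k)]
          exact hprod
        rwa [Finset.prod_mul_distrib, hprodv, one_mul] at h1
      have hD's : ∀ k ∉ s.erase i, D' k = 1 := by
        intro k hk
        rw [Finset.mem_erase] at hk
        push_neg at hk
        by_cases hki : k = i
        · simp [hD', hki]
        · have hks : k ∉ s := hk hki
          have hkj : k ≠ j := fun h => hks (h ▸ hjs)
          simp [hD', hki, hkj, hs k hks]
      obtain ⟨L', hL'⟩ := IH (s.erase i) (Finset.erase_ssubset his) D' hD's hprodD'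
      have hij : i ≠ j := hji.symm
      refine ⟨⟨i, j, hij, D i⟩ :: ⟨j, i, hji, -(D i)⁻¹⟩ :: ⟨i, j, hij, D i⟩ ::
        ⟨i, j, hij, -1⟩ :: ⟨j, i, hji, 1⟩ :: ⟨i, j, hij, -1⟩ :: L', ?_⟩
      simp only [List.map_cons, List.prod_cons, TransvectionStruct.toMatrix_mk, hL']
      rw [show ∀ A B C E F G X : Matrix (Fin d) (Fin d) ℝ,
        A * (B * (C * (E * (F * (G * X))))) = (A * (B * (C * (E * (F * G))))) * X from
        fun A B C E F G X => by noncomm_ring]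
      rw [six_transvections i j hij (D i) (hne0 i), diagonal_mul_diagonal]
      exact congrArg diagonal (funext fun k => (hpoint k).symm)

lemma exists_transvec_list (G : Matrix (Fin d) (Fin d) ℝ) (hG : G.det = 1) :
    ∃ L : List (TransvectionStruct (Fin d) ℝ),
      (L.map TransvectionStruct.toMatrix).prod = G := by
  obtain ⟨L, L', D, h⟩ := Pivot.exists_list_transvec_mul_diagonal_mul_list_transvec G
  have hdet : ∏ k, D k = 1 := by
    have h2 := hG
    rw [h, det_mul, det_mul, TransvectionStruct.det_toMatrix_prod,
      TransvectionStruct.det_toMatrix_prod, det_diagonal, one_mul, mul_one] at h2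
    exact h2
  obtain ⟨L0, hL0⟩ := diag_decomp Finset.univ D
    (fun k hk => absurd (Finset.mem_univ k) hk) hdet
  refine ⟨L ++ L0 ++ L', ?_⟩
  rw [List.map_append, List.map_append, List.prod_append, List.prod_append, hL0, ← h]


lemma kron_map_ringHom {R S : Type*} [CommRing R] [CommRing S] (f : R →+* S)
    {m : Type*} [Fintype m] (A B : Matrix m m R) :
    (A ⊗ₖ B).map f = (A.map f) ⊗ₖ (B.map f) := by
  ext ⟨a, b⟩ ⟨c, e⟩
  simp [Matrix.kroneckerMap_apply, Matrix.map_apply, _root_.map_mul]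

lemma matrix_map_mul' {R S : Type*} [CommRing R] [CommRing S] (f : R →+* S)
    {m : Type*} [Fintype m] [DecidableEq m] (A B : Matrix m m R) :
    (A * B).map f = (A.map f) * (B.map f) :=
  RingHom.map_mul (RingHom.mapMatrix f) A B

lemma matrix_map_sub_one {R S : Type*} [CommRing R] [CommRing S] (f : R →+* S)
    {m : Type*} [Fintype m] [DecidableEq m] (A : Matrix m m R) :
    (A - 1).map f = A.map f - 1 := by
  have := RingHom.map_sub (RingHom.mapMatrix f) A 1
  simpa [RingHom.mapMatrix_apply] using this


end SmoothHyperbolicAux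

open SmoothHyperbolicAux in
/-- for `d > 2` and `H ∈ SL(d,ℝ)` there is a `C^∞` curve `H_t` in `SL(d,ℝ)`
with `H₀ = Id` such that `H·H_t` is hyperbolic for every `t ∈ (0,1]`. -/
theorem smooth_curve_to_hyperbolic (d : ℕ) (hd : 2 < d)
    (H : Matrix (Fin d) (Fin d) ℝ) (hH : H.det = 1) :
    ∃ γ : ℝ → Matrix (Fin d) (Fin d) ℝ,
      ContDiff ℝ (⊤ : ℕ∞) γ ∧ γ 0 = 1 ∧ (∀ t ∈ Set.Icc (0 : ℝ) 1, (γ t).det = 1) ∧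
        ∀ t ∈ Set.Ioc (0 : ℝ) 1, IsHyperbolic (H * γ t) := by
  -- the target hyperbolic diagonal matrix
  have hd0 : 0 < d := by omega
  set i0 : Fin d := ⟨0, hd0⟩ with hi0
  set q : ℝ := (2:ℝ)^(d-1) with hqdef
  have hq4 : (4:ℝ) ≤ q := by
    rw [hqdef, show (4:ℝ) = 2^2 by norm_num]
    exact pow_le_pow_right₀ one_le_two (by omega)
  have hqpos : 0 < q := by positivity
  set δ : Fin d → ℝ := fun k => if k = i0 then q⁻¹ else 2 with hδ
  have hδ0 : ∀ k, δ k ≠ 0 := by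
    intro k
    rw [hδ]
    dsimp only
    split_ifs
    · positivity
    · norm_num
  have hpair : ∀ k l, δ k * δ l ≠ 1 := by
    intro k l
    have hqi : q⁻¹ ≤ 4⁻¹ := by
      apply inv_anti₀ <;> norm_num [hq4]
    have hqipos : 0 < q⁻¹ := by positivity
    rw [hδ]
    dsimp only
    split_ifs <;> nlinarith
  have hdetδ : ∏ k, δ k = 1 := by
    rw [← Finset.mul_prod_erase Finset.univ δ (Finset.mem_univ i0)]
    have h1 : δ i0 = q⁻¹ := by simp [hδ]
    have h2 : ∏ k ∈ Finset.univ.erase i0, δ k = q := by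
      rw [Finset.prod_congr rfl (fun k hk => ?_), Finset.prod_const]
      · rw [Finset.card_erase_of_mem (Finset.mem_univ i0), Finset.card_univ,
          Fintype.card_fin, hqdef]
      · rw [hδ]
        simp only
        rw [if_neg (Finset.mem_erase.mp hk).1]
    rw [h1, h2, inv_mul_cancel₀ (ne_of_gt hqpos)]
  set Dm : Matrix (Fin d) (Fin d) ℝ := diagonal δ with hDm
  have hHunit : IsUnit H.det := by rw [hH]; exact isUnit_one
  set G : Matrix (Fin d) (Fin d) ℝ := H⁻¹ * Dm with hG
  have hGdet : G.det = 1 := by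
    rw [hG, det_mul, det_nonsing_inv, hH, hDm, det_diagonal, hdetδ]
    norm_num
  have hHG : H * G = Dm := by
    rw [hG, ← mul_assoc, mul_nonsing_inv H hHunit, one_mul]
  obtain ⟨L, hL⟩ := exists_transvec_list G hGdet
  -- the polynomial certificate
  set Kp : Matrix (Fin d) (Fin d) ℝ[X] := (H.map C) * tpoly L with hKp
  set F : ℝ[X] := ((Kp ⊗ₖ Kp) - 1).det with hF
  have hmapC : ∀ t : ℝ, (H.map C).map (eval t) = H := by
    intro t
    rw [Matrix.map_map]
    convert Matrix.map_id H
    funext r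
    simp [Function.comp, eval_C]
  have hevalF : ∀ t : ℝ, F.eval t
      = (((H * tpath L t) ⊗ₖ (H * tpath L t)) - 1).det := by
    intro t
    rw [hF, ← coe_evalRingHom, RingHom.map_det, RingHom.mapMatrix_apply, matrix_map_sub_one,
      kron_map_ringHom, hKp, matrix_map_mul', coe_evalRingHom, hmapC, tpoly_map_eval]
  have hF1 : F.eval 1 ≠ 0 := by
    rw [hevalF 1, tpath_one, hL, hHG, hDm, diagonal_kronecker_diagonal,
      ← diagonal_one, diagonal_sub, det_diagonal]
    rw [Finset.prod_ne_zero_iff]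
    rintro ⟨k, l⟩ -
    exact sub_ne_zero.mpr (by simpa using hpair k l)
  have hFne : F ≠ 0 := fun h => hF1 (by rw [h]; simp)
  -- choose ε below all positive roots
  have hfin : Set.Finite {x : ℝ | F.IsRoot x} := Polynomial.finite_setOf_isRoot hFne
  set Pf : Finset ℝ := hfin.toFinset.filter (fun x => 0 < x) with hPf
  set ε : ℝ := if h : Pf.Nonempty then min 1 (Pf.min' h / 2) else 1 with hε
  have hεpos : 0 < ε := by
    rw [hε]
    split_ifs with h
    · refine lt_min one_pos ?_
      obtain ⟨m, hmeq⟩ : ∃ m, Pf.min' h = m := ⟨_, rfl⟩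
      have hm : m ∈ Pf := hmeq ▸ Finset.min'_mem Pf h
      rw [hPf, Finset.mem_filter] at hm
      rw [hmeq]
      linarith [hm.2]
    · exact one_pos
  have hε1 : ε ≤ 1 := by
    rw [hε]; split_ifs with h
    · exact min_le_left _ _
    · exact le_refl 1
  have hnoroot : ∀ u : ℝ, 0 < u → u ≤ ε → F.eval u ≠ 0 := by
    intro u hu hue hroot
    have humem : u ∈ Pf := by
      rw [hPf, Finset.mem_filter, Set.Finite.mem_toFinset]
      exact ⟨hroot, hu⟩
    have hne : Pf.Nonempty := ⟨u, humem⟩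
    have hmle : Pf.min' hne ≤ u := Finset.min'_le Pf u humem
    have hmpos : 0 < Pf.min' hne := by
      obtain ⟨m, hmeq⟩ : ∃ m, Pf.min' hne = m := ⟨_, rfl⟩
      have hm : m ∈ Pf := hmeq ▸ Finset.min'_mem Pf hne
      rw [hPf, Finset.mem_filter] at hm
      rw [hmeq]
      exact hm.2
    simp only [hε, dif_pos hne] at hue
    have := min_le_right 1 (Pf.min' hne / 2)
    linarith
  -- the curve
  refine ⟨fun t => tpath L (ε * t), ?_, ?_, ?_, ?_⟩
  · exact (tpath_contDiff L).comp (contDiff_const.mul contDiff_id)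
  · show tpath L (ε * 0) = 1
    rw [mul_zero, tpath_zero]
  · intro t _
    exact tpath_det L (ε * t)
  · rintro t ⟨ht0, ht1⟩ μ hroot habs
    set u : ℝ := ε * t with hu
    have hupos : 0 < u := mul_pos hεpos ht0
    have hule : u ≤ ε := by
      rw [hu]
      nlinarith
    have hFu : F.eval u ≠ 0 := hnoroot u hupos hule
    set K : Matrix (Fin d) (Fin d) ℝ := H * tpath L u with hK
    set A : Matrix (Fin d) (Fin d) ℂ := K.map Complex.ofReal with hA
    have hcharA : A.charpoly = K.charpoly.map Complex.ofRealHom := by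
      rw [hA]
      exact Matrix.charpoly_map K Complex.ofRealHom
    have hrootA : A.charpoly.IsRoot μ := hroot
    have hrootA' : A.charpoly.IsRoot ((starRingEnd ℂ) μ) := by
      have key : (A.charpoly).eval ((starRingEnd ℂ) μ)
          = (starRingEnd ℂ) ((A.charpoly).eval μ) := by
        rw [hcharA, eval_map, eval_map, Polynomial.hom_eval₂]
        congr 1
        ext r
        simp [Complex.conj_ofReal]
      rw [Polynomial.IsRoot, key, hrootA.eq_zero, map_zero]
    have hμν : μ * (starRingEnd ℂ) μ = 1 := by
      rw [Complex.mul_conj]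
      norm_cast
      rw [← Complex.sq_norm, habs, one_pow]
    have hzero : (A ⊗ₖ A - 1).det = 0 := kron_det_zero A μ _ hrootA hrootA' hμν
    have hmap : (A ⊗ₖ A - 1) = (((K ⊗ₖ K) - 1)).map Complex.ofRealHom := by
      rw [matrix_map_sub_one, kron_map_ringHom]
      rfl
    rw [hmap, ← RingHom.mapMatrix_apply, ← RingHom.map_det] at hzero
    have : ((K ⊗ₖ K) - 1).det = 0 := by
      have h2 : Complex.ofRealHom (((K ⊗ₖ K) - 1).det) = 0 := hzero
      rwa [map_eq_zero_iff Complex.ofRealHom Complex.ofReal_injective] at h2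
    rw [← hevalF u] at this
    exact hFu this
end

section
/- For a transitive subshift of finite type σ : Σ_H → Σ_H and two periodic points p = (…,a;a,a,…) and p' = (…,a';a',a',…) associated to admissible words a and a', there exist words b, c such that for all i, j ∈ ℕ the periodic point associated to the concatenated word c·a^i·b·(a')^j belongs to Σ_H; moreover, given a uniformly continuous A : Σ_H → SL(d,ℝ) and ε > 0, for i, j sufficiently large the word of matrix values of A along an appropriate segment of the orbit of this periodic point is ε-close (entrywise in operator norm, coordinate by coordinate) to a matrix transition from the periodic word of A at p' to the periodic word of A at p. -/
open Matrix

attribute [local instance] Matrix.linftyOpNormedAddCommGroup Matrix.linftyOpNormedRing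

set_option linter.unusedSectionVars false
set_option linter.unusedTactic false
set_option linter.unreachableTactic false
set_option maxHeartbeats 1000000

/-- The translation by `t` on `Σ_m` (for `t = 1` this is the shift map `σ`). -/
def shiftZ {m : ℕ} (t : ℤ) (x : ℤ → Fin m) : ℤ → Fin m := fun i => x (i + t)

/-- The subshift of finite type determined by the transition relation `Hrel`. -/
def SFTset {m : ℕ} (Hrel : Fin m → Fin m → Prop) : Set (ℤ → Fin m) :=
  {x | ∀ i : ℤ, Hrel (x i) (x (i + 1))}

/-- The periodic point of `Σ_m` associated with a finite word `L` (repeating `L`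
bi-infinitely, with the word starting at position `0`). -/
def perExt {m : ℕ} [NeZero m] (L : List (Fin m)) : ℤ → Fin m :=
  fun t => L.getD (t % (L.length : ℤ)).toNat default

/-! ### auxiliary lemmas -/

instance finUS (n : ℕ) : UniformSpace (Fin n) :=
  (⊥ : UniformSpace (Fin n)).replaceTopology (by rw [UniformSpace.toTopologicalSpace_bot]; rfl)

lemma unif_key {m d : ℕ} (A : (ℤ → Fin m) → Matrix (Fin d) (Fin d) ℝ)
    (hA : Continuous A) {ε : ℝ} (hε : 0 < ε) :
    ∃ R : ℕ, ∀ x y : ℤ → Fin m, (∀ t : ℤ, t.natAbs ≤ R → x t = y t) → ‖A x - A y‖ < ε := by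
  have hu : UniformContinuous A := CompactSpace.uniformContinuous_of_continuous hA
  have hmem : {p : (ℤ → Fin m) × (ℤ → Fin m) | dist (A p.1) (A p.2) < ε} ∈
      uniformity (ℤ → Fin m) := hu (Metric.dist_mem_uniformity hε)
  rw [Pi.uniformity] at hmem
  rw [Filter.mem_iInf] at hmem
  obtain ⟨I, hIfin, V, hV, hEq⟩ := hmem
  refine ⟨hIfin.toFinset.sup (fun t => t.natAbs), fun x y hxy => ?_⟩
  have hxyI : ∀ i : I, (x, y) ∈ V i := by
    intro i
    obtain ⟨W, hW, hWsub⟩ := hV i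
    apply hWsub
    have hx : x (i:ℤ) = y (i:ℤ) := by
      apply hxy
      exact Finset.le_sup (f := fun t : ℤ => t.natAbs) (hIfin.mem_toFinset.mpr i.2)
    show ((x, y).1 (i:ℤ), (x, y).2 (i:ℤ)) ∈ W
    simp only
    rw [hx]
    exact refl_mem_uniformity hW
  have : (x, y) ∈ {p : (ℤ → Fin m) × (ℤ → Fin m) | dist (A p.1) (A p.2) < ε} := by
    rw [hEq]
    exact Set.mem_iInter.mpr hxyI
  simp only [Set.mem_setOf_eq] at this
  rwa [dist_eq_norm] at this

section Aux

variable {m : ℕ} [NeZero m] {Hrel : Fin m → Fin m → Prop}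

lemma toNat_mod_eq (z : ℤ) (n : ℕ) (hz : 0 ≤ z) : z.toNat % n = (z % (n:ℤ)).toNat := by
  have h1 : ((z.toNat % n : ℕ) : ℤ) = z % (n:ℤ) := by
    rw [Int.natCast_mod, Int.toNat_of_nonneg hz]
  have := congrArg Int.toNat h1
  rwa [Int.toNat_natCast] at this

lemma perExt_natCast (L : List (Fin m)) (nn : ℕ) :
    perExt L (nn : ℤ) = L.getD (nn % L.length) default := by
  unfold perExt
  rw [← Int.natCast_mod, Int.toNat_natCast]

lemma perExt_natCast_lt (L : List (Fin m)) (nn : ℕ) (h : nn < L.length) :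
    perExt L (nn : ℤ) = L.getD nn default := by
  rw [perExt_natCast, Nat.mod_eq_of_lt h]

lemma perExt_add_length (L : List (Fin m)) (z : ℤ) :
    perExt L (z + L.length) = perExt L z := by
  unfold perExt
  rw [show z + (L.length:ℤ) = z + (L.length:ℤ) * 1 by ring, Int.add_mul_emod_self_left]

lemma flat_getD (a : List (Fin m)) (j o : ℕ) (ho : o < j * a.length) :
    ((List.replicate j a).flatten).getD o default = a.getD (o % a.length) default := by
  induction j generalizing o with
  | zero => omega
  | succ j ih =>
    rw [List.replicate_succ, List.flatten_cons]
    rcases lt_or_ge o a.length with h | h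
    · rw [List.getD_append _ _ _ _ h, Nat.mod_eq_of_lt h]
    · rw [List.getD_append_right _ _ _ _ h, ih _ (by
        rcases Nat.exists_eq_add_of_le h with ⟨u, rfl⟩
        rw [Nat.succ_mul] at ho; omega)]
      congr 1
      rcases Nat.exists_eq_add_of_le h with ⟨u, rfl⟩
      simp [Nat.add_mod_left]

lemma flat_length (a : List (Fin m)) (j : ℕ) :
    ((List.replicate j a).flatten).length = j * a.length := by
  simp [List.length_flatten, List.map_replicate, List.sum_replicate, smul_eq_mul]

lemma chain'_getD (L : List (Fin m)) (h : List.Chain' Hrel L) (r : ℕ) (hr : r + 1 < L.length) :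
    Hrel (L.getD r default) (L.getD (r+1) default) := by
  rw [List.getD_eq_getElem _ _ (by omega), List.getD_eq_getElem _ _ hr]
  exact List.isChain_iff_getElem.mp h r (by omega)

lemma getD_doubled (L : List (Fin m)) (r : ℕ) (hr : r < 2 * L.length) :
    (L ++ L).getD r default = L.getD (r % L.length) default := by
  rcases lt_or_ge r L.length with h | h
  · rw [List.getD_append _ _ _ _ h, Nat.mod_eq_of_lt h]
  · rw [List.getD_append_right _ _ _ _ h]
    congr 1
    rcases Nat.exists_eq_add_of_le h with ⟨u, rfl⟩
    simp [Nat.add_mod_left, Nat.mod_eq_of_lt (by omega : u < L.length)]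

lemma perExt_mem_of_chain (L : List (Fin m)) (hL : L ≠ [])
    (hc : List.Chain' Hrel (L ++ L)) : perExt L ∈ SFTset Hrel := by
  have hn : 0 < L.length := List.length_pos_iff.mpr hL
  intro i
  set n := L.length with hn'
  have h1 : 0 ≤ i % (n:ℤ) := Int.emod_nonneg _ (by exact_mod_cast hn.ne')
  have h2 : i % (n:ℤ) < n := Int.emod_lt_of_pos _ (by exact_mod_cast hn)
  set r := (i % (n:ℤ)).toNat with hr'
  have hr : r < n := by omega
  have key := chain'_getD (Hrel := Hrel) (L ++ L) hc r (by rw [List.length_append]; omega)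
  rw [getD_doubled _ _ (by omega), getD_doubled _ _ (by omega), Nat.mod_eq_of_lt hr] at key
  have e1 : perExt L i = L.getD r default := rfl
  have e2 : perExt L (i+1) = L.getD ((r+1) % n) default := by
    unfold perExt
    congr 1
    have : (i + 1) % (n:ℤ) = ((r:ℤ) + 1) % n := by
      have : (i:ℤ) % n = r := by omega
      conv_lhs => rw [show i + 1 = (i % n + 1) + n * (i / n) by rw [Int.emod_def]; ring]
      rw [Int.add_mul_emod_self_left, this]
    rw [this, show ((r:ℤ)+1) = ((r+1:ℕ):ℤ) by push_cast; ring, ← Int.natCast_mod,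
      Int.toNat_natCast]
  rw [e1, e2]
  exact key

lemma chain_doubled_of_mem (L : List (Fin m)) (hL : L ≠ [])
    (hp : perExt L ∈ SFTset Hrel) : List.Chain' Hrel (L ++ L) := by
  have hn : 0 < L.length := List.length_pos_iff.mpr hL
  rw [List.Chain', List.isChain_iff_getElem]
  intro r hr
  rw [List.length_append] at hr
  have h1 : Hrel (perExt L r) (perExt L (r+1)) := by
    have := hp (r : ℤ)
    simpa using this
  rw [perExt_natCast, show ((r:ℤ)+1) = ((r+1:ℕ):ℤ) by push_cast; ring, perExt_natCast] at h1
  have hh : Hrel ((L++L).getD r default) ((L++L).getD (r+1) default) := by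
    rw [getD_doubled _ _ (by omega), getD_doubled _ _ (by omega)]
    exact h1
  rw [List.getD_eq_getElem _ _ (by rw [List.length_append]; omega),
      List.getD_eq_getElem _ _ (by rw [List.length_append]; omega)] at hh
  simpa using hh

lemma shiftZ_mem (t : ℤ) {x : ℤ → Fin m} (hx : x ∈ SFTset Hrel) :
    shiftZ t x ∈ SFTset Hrel := by
  intro i
  have := hx (i + t)
  simp only [shiftZ]
  convert this using 2
  ring

/-- the connecting path word `[x 1, ..., x n]` -/
def midw {m : ℕ} (x : ℤ → Fin m) (n : ℕ) : List (Fin m) :=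
  (List.range n).map fun k : ℕ => x ((k : ℤ) + 1)

lemma glue_chain (x : ℤ → Fin m) (hx : x ∈ SFTset Hrel) (n : ℕ)
    (l1 l2 : List (Fin m)) (h1 : List.Chain' Hrel l1) (h2 : List.Chain' Hrel l2)
    (hl1 : l1.getLast? = some (x 0)) (hl2 : l2.head? = some (x ((n:ℤ)+1))) :
    List.Chain' Hrel (l1 ++ midw x n ++ l2) := by
  have hchain : List.Chain' Hrel (midw x n) := by
    rw [midw, List.Chain', List.isChain_map]
    cases n with
    | zero => simp
    | succ n' =>
      rw [List.isChain_range_succ]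
      intro k hk
      have := hx ((k:ℤ)+1)
      convert this using 2 <;> (push_cast; ring)
  rw [List.Chain', List.isChain_append]
  refine ⟨?_, h2, ?_⟩
  · rw [List.isChain_append]
    refine ⟨h1, hchain, ?_⟩
    intro u hu v hv
    rw [hl1] at hu
    cases n with
    | zero => simp [midw] at hv
    | succ n' =>
      have hv' : v = x ((0:ℤ)+1) := by
        rw [midw, List.range_succ_eq_map, List.map_cons] at hv
        simp at hv
        simp [hv]
      simp at hu
      subst hu; rw [hv']
      exact hx 0
  · intro u hu v hv
    rw [hl2] at hv; simp at hv; subst hv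
    rw [List.getLast?_append] at hu
    cases n with
    | zero =>
      simp [midw] at hu
      rw [hl1] at hu; simp at hu; subst hu
      exact hx 0
    | succ n' =>
      have : (midw x (n'+1)).getLast? = some (x ((n':ℤ)+1)) := by
        rw [midw, List.range_succ, List.map_append]
        simp
      rw [this] at hu
      simp at hu; subst hu
      have := hx ((n':ℤ)+1)
      convert this using 2 <;> (push_cast; ring)

lemma head?_eq_getD (L : List (Fin m)) (hL : L ≠ []) :
    L.head? = some (L.getD 0 default) := by
  cases L with
  | nil => exact absurd rfl hL
  | cons u t => rfl

lemma getLast?_eq_getD (L : List (Fin m)) (hL : L ≠ []) :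
    L.getLast? = some (L.getD (L.length - 1) default) := by
  rw [List.getLast?_eq_getLast hL]
  congr 1
  rw [List.getLast_eq_getElem,
    List.getD_eq_getElem _ _ (by have := List.length_pos_iff.mpr hL; omega)]

/-- transitivity gives a connecting SFT-point between two 0-values of SFT points -/
lemma connect
    (hTrans : ∀ U V : Set (ℤ → Fin m), IsOpen U → IsOpen V →
      (U ∩ SFTset Hrel).Nonempty → (V ∩ SFTset Hrel).Nonempty →
      ∃ x ∈ U ∩ SFTset Hrel, ∃ n : ℕ, shiftZ (n : ℤ) x ∈ V)
    (s s' : Fin m) (hs : ∃ x ∈ SFTset Hrel, x 0 = s) (hs' : ∃ x ∈ SFTset Hrel, x 0 = s') :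
    ∃ (x : ℤ → Fin m) (n : ℕ), x ∈ SFTset Hrel ∧ x 0 = s ∧ x ((n:ℤ)+1) = s' := by
  obtain ⟨xs, hxs, hxs0⟩ := hs
  obtain ⟨xs', hxs', hxs'0⟩ := hs'
  have hU : IsOpen {y : ℤ → Fin m | y 0 = s} := by
    have he : {y : ℤ → Fin m | y 0 = s} = (fun y : ℤ → Fin m => y (0:ℤ)) ⁻¹' {s} := rfl
    rw [he]
    exact (continuous_apply _).isOpen_preimage _ (isOpen_discrete _)
  have hV : IsOpen {y : ℤ → Fin m | y 1 = s'} := by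
    have he : {y : ℤ → Fin m | y 1 = s'} = (fun y : ℤ → Fin m => y (1:ℤ)) ⁻¹' {s'} := rfl
    rw [he]
    exact (continuous_apply _).isOpen_preimage _ (isOpen_discrete _)
  obtain ⟨x, ⟨hx0, hxSFT⟩, n, hxn⟩ := hTrans _ _ hU hV ⟨xs, hxs0, hxs⟩
    ⟨shiftZ (-1) xs', by simp [shiftZ, hxs'0], shiftZ_mem _ hxs'⟩
  refine ⟨x, n, hxSFT, hx0, ?_⟩
  have : x (1 + (n:ℤ)) = s' := hxn
  rw [← this]; congr 1; ring

lemma head?_flatten_sub (a : List (Fin m)) (k : ℕ) :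
    ∀ v ∈ ((List.replicate k a).flatten).head?, v ∈ a.head? := by
  induction k with
  | zero => simp
  | succ k ih =>
    intro v hv
    rw [List.replicate_succ, List.flatten_cons, List.head?_append] at hv
    cases h : a.head? with
    | some w => rw [h] at hv; simpa using hv
    | none =>
      rw [h] at hv; simp at hv
      have := ih v hv
      rw [h] at this; simpa using this
  
lemma getLast?_flatten_sub (a : List (Fin m)) (k : ℕ) :
    ∀ v ∈ ((List.replicate k a).flatten).getLast?, v ∈ a.getLast? := by
  induction k with
  | zero => simp
  | succ k ih =>
    intro v hv
    rw [List.replicate_succ, List.flatten_cons, List.getLast?_append] at hv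
    cases h : ((List.replicate k a).flatten).getLast? with
    | some w =>
      rw [h] at hv; simp at hv; subst hv
      exact ih w h
    | none => rw [h] at hv; simpa using hv

lemma chain'_flatten (a : List (Fin m)) (hchain : List.Chain' Hrel a)
    (hRR : ∀ u ∈ a.getLast?, ∀ v ∈ a.head?, Hrel u v) (k : ℕ) :
    List.Chain' Hrel ((List.replicate k a).flatten) := by
  induction k with
  | zero => simp [List.Chain']
  | succ k ih =>
    rw [List.replicate_succ, List.flatten_cons, List.Chain', List.isChain_append]
    exact ⟨hchain, ih, fun u hu v hv => hRR u hu v (head?_flatten_sub a k v hv)⟩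

lemma lenW (c b a a' : List (Fin m)) (i j : ℕ) :
    (c ++ (List.replicate i a).flatten ++ b ++ (List.replicate j a').flatten).length
      = c.length + i*a.length + b.length + j*a'.length := by
  simp only [List.length_append, flat_length]

lemma W_right (c b a a' : List (Fin m)) (i j : ℕ) (o : ℕ) (ho : o < j * a'.length) :
    perExt (c ++ (List.replicate i a).flatten ++ b ++ (List.replicate j a').flatten)
      ((c.length + i*a.length + b.length + o : ℕ) : ℤ) = a'.getD (o % a'.length) default := by
  have hS : (c ++ (List.replicate i a).flatten ++ b).length
      = c.length + i*a.length + b.length := by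
    simp only [List.length_append, flat_length]
  rw [perExt_natCast_lt _ _ (by rw [lenW]; exact Nat.add_lt_add_left ho _),
    List.getD_append_right _ _ _ _ (by rw [hS]; exact Nat.le_add_right _ _), hS,
    Nat.add_sub_cancel_left, flat_getD _ _ _ ho]

lemma W_left (c b a a' : List (Fin m)) (i j : ℕ) (o : ℕ) (ho : o < i * a.length) :
    perExt (c ++ (List.replicate i a).flatten ++ b ++ (List.replicate j a').flatten)
      ((c.length + o : ℕ) : ℤ) = a.getD (o % a.length) default := by
  have hS2 : (c ++ (List.replicate i a).flatten).length = c.length + i*a.length := by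
    simp only [List.length_append, flat_length]
  have h1 : c.length + o < (c ++ (List.replicate i a).flatten).length := by
    rw [hS2]; exact Nat.add_lt_add_left ho _
  have h2 : c.length + o < (c ++ (List.replicate i a).flatten ++ b).length := by
    rw [List.length_append]; exact Nat.lt_of_lt_of_le h1 (Nat.le_add_right _ _)
  rw [perExt_natCast_lt _ _ (by
      rw [List.length_append]; exact Nat.lt_of_lt_of_le h2 (Nat.le_add_right _ _)),
    List.getD_append _ _ _ _ h2, List.getD_append _ _ _ _ h1,
    List.getD_append_right _ _ _ _ (Nat.le_add_right _ _), Nat.add_sub_cancel_left,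
    flat_getD _ _ _ ho]

lemma opt_eq {α : Type*} {o : Option α} {w v : α} (h : o = some w) (hv : v ∈ o) : v = w := by
  rw [h] at hv
  exact (Option.some_inj.mp (Option.mem_def.mp hv)).symm

lemma opt_some_or {α : Type*} (a : α) (o : Option α) : (some a).or o = some a := rfl

end Aux

set_option linter.unnecessarySimpa false

/-- for a transitive SFT and periodic points `p = perExt a`,
`p' = perExt a'`, there are connecting words `b, c` such that all the periodic points of
the words `c · aⁱ · b · (a')ʲ` lie in `Σ_H`; moreover, for a (uniformly) continuous
`SL(d,ℝ)`-valued `A` and `ε > 0`, for `i, j` large the word of values of `A` along a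
suitable orbit segment of this periodic point is `ε`-close to a matrix transition from
the periodic word of `A` at `p'` to the periodic word of `A` at `p`. -/
theorem sft_has_transitions
    (m d : ℕ) [NeZero m] (Hrel : Fin m → Fin m → Prop)
    (A : (ℤ → Fin m) → Matrix (Fin d) (Fin d) ℝ) (hA : Continuous A)
    (hdet : ∀ x ∈ SFTset Hrel, (A x).det = 1)
    (hTrans : ∀ U V : Set (ℤ → Fin m), IsOpen U → IsOpen V →
      (U ∩ SFTset Hrel).Nonempty → (V ∩ SFTset Hrel).Nonempty →
      ∃ x ∈ U ∩ SFTset Hrel, ∃ n : ℕ, shiftZ (n : ℤ) x ∈ V)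
    (a a' : List (Fin m)) (ha : a ≠ []) (ha' : a' ≠ [])
    (hp : perExt a ∈ SFTset Hrel) (hp' : perExt a' ∈ SFTset Hrel) :
    ∃ b c : List (Fin m),
      (∀ i j : ℕ,
        perExt (c ++ (List.replicate i a).flatten ++ b ++ (List.replicate j a').flatten) ∈
          SFTset Hrel) ∧
      ∀ ε > (0 : ℝ), ∃ N : ℕ, ∀ i ≥ N, ∀ j ≥ N,
        ∃ (len : ℕ) (t0 : ℤ) (V : ℕ → Matrix (Fin d) (Fin d) ℝ),
          a.length ≤ len ∧ a'.length ≤ len ∧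
          (∀ s < len,
            ‖A (shiftZ (t0 + (s : ℤ))
                (perExt (c ++ (List.replicate i a).flatten ++ b ++
                  (List.replicate j a').flatten))) - V s‖ < ε) ∧
          (∀ s < a'.length, V s = A (shiftZ (s : ℤ) (perExt a'))) ∧
          (∀ s < a.length, V (len - a.length + s) = A (shiftZ (s : ℤ) (perExt a))) := by
  classical
  have hla : 0 < a.length := List.length_pos_iff.mpr ha
  have hla' : 0 < a'.length := List.length_pos_iff.mpr ha'
  -- cyclic chain facts for `a` and `a'`
  have hca := chain_doubled_of_mem (Hrel := Hrel) a ha hp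
  have hca' := chain_doubled_of_mem (Hrel := Hrel) a' ha' hp'
  obtain ⟨hchain_a, -, hrel_aa⟩ := List.isChain_append.mp hca
  obtain ⟨hchain_a', -, hrel_a'a'⟩ := List.isChain_append.mp hca'
  have hlastA : a.getLast? = some (a.getD (a.length - 1) default) := getLast?_eq_getD a ha
  have hheadA : a.head? = some (a.getD 0 default) := head?_eq_getD a ha
  have hlastA' : a'.getLast? = some (a'.getD (a'.length - 1) default) := getLast?_eq_getD a' ha'
  have hheadA' : a'.head? = some (a'.getD 0 default) := head?_eq_getD a' ha'
  have Raa : Hrel (a.getD (a.length - 1) default) (a.getD 0 default) :=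
    hrel_aa _ (by rw [hlastA]; rfl) _ (by rw [hheadA]; rfl)
  have Ra'a' : Hrel (a'.getD (a'.length - 1) default) (a'.getD 0 default) :=
    hrel_a'a' _ (by rw [hlastA']; rfl) _ (by rw [hheadA']; rfl)
  -- SFT points hitting the relevant symbols at time 0
  have hsA : ∃ x ∈ SFTset Hrel, x 0 = a.getD (a.length - 1) default := by
    refine ⟨shiftZ ((a.length - 1 : ℕ) : ℤ) (perExt a), shiftZ_mem _ hp, ?_⟩
    show perExt a ((0:ℤ) + ((a.length - 1 : ℕ) : ℤ)) = _
    rw [zero_add, perExt_natCast_lt _ _ (by omega)]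
  have hsA' : ∃ x ∈ SFTset Hrel, x 0 = a'.getD 0 default := by
    refine ⟨perExt a', hp', ?_⟩
    have := perExt_natCast_lt a' 0 hla'
    simpa using this
  have hsAhead : ∃ x ∈ SFTset Hrel, x 0 = a.getD 0 default := by
    refine ⟨perExt a, hp, ?_⟩
    have := perExt_natCast_lt a 0 hla
    simpa using this
  have hsA'last : ∃ x ∈ SFTset Hrel, x 0 = a'.getD (a'.length - 1) default := by
    refine ⟨shiftZ ((a'.length - 1 : ℕ) : ℤ) (perExt a'), shiftZ_mem _ hp', ?_⟩
    show perExt a' ((0:ℤ) + ((a'.length - 1 : ℕ) : ℤ)) = _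
    rw [zero_add, perExt_natCast_lt _ _ (by omega)]
  -- connecting paths
  obtain ⟨x, n1, hxS, hx0, hxe⟩ := connect hTrans _ _ hsA hsA'
  obtain ⟨y, n2, hyS, hy0, hye⟩ := connect hTrans _ _ hsA'last hsAhead
  set b := a ++ midw x n1 ++ a' with hbdef
  set c := a' ++ midw y n2 ++ a with hcdef
  have hchainb : List.Chain' Hrel b :=
    glue_chain x hxS n1 a a' hchain_a hchain_a' (by rw [hlastA, hx0]) (by rw [hheadA', hxe])
  have hchainc : List.Chain' Hrel c :=
    glue_chain y hyS n2 a' a hchain_a' hchain_a (by rw [hlastA', hy0]) (by rw [hheadA, hye])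
  have hheadb : b.head? = some (a.getD 0 default) := by
    rw [hbdef]
    simp only [List.head?_append, hheadA]
    rfl
  have hlastb : b.getLast? = some (a'.getD (a'.length - 1) default) := by
    rw [hbdef]
    simp only [List.getLast?_append, hlastA']
    rfl
  have hheadc : c.head? = some (a'.getD 0 default) := by
    rw [hcdef]
    simp only [List.head?_append, hheadA']
    rfl
  have hlastc : c.getLast? = some (a.getD (a.length - 1) default) := by
    rw [hcdef]
    simp only [List.getLast?_append, hlastA]
    rfl
  refine ⟨b, c, ?_, ?_⟩
  · -- membership of all the periodic points
    intro i j
    set W := c ++ (List.replicate i a).flatten ++ b ++ (List.replicate j a').flatten with hWdef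
    have hWne : W ≠ [] := by
      have h0 : 0 < W.length := by
        rw [hWdef, lenW]
        have hc0 : 0 < c.length := List.length_pos_iff.mpr (by rw [hcdef]; simp [ha'])
        omega
      exact List.length_pos_iff.mp h0
    have hchainW : List.Chain' Hrel W := by
      rw [hWdef, List.Chain', List.isChain_append]
      refine ⟨?_, chain'_flatten a' hchain_a' hrel_a'a' j, ?_⟩
      · rw [List.isChain_append]
        refine ⟨?_, hchainb, ?_⟩
        · rw [List.isChain_append]
          refine ⟨hchainc, chain'_flatten a hchain_a hrel_aa i, ?_⟩
          intro u hu v hv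
          have hu' := opt_eq hlastc hu
          have hv' := opt_eq hheadA (head?_flatten_sub a i v hv)
          subst hu'; subst hv'
          exact Raa
        · intro u hu v hv
          have hv' := opt_eq hheadb hv
          subst hv'
          rw [List.getLast?_append] at hu
          cases hcase : ((List.replicate i a).flatten).getLast? with
          | some w =>
            rw [hcase, opt_some_or] at hu
            have hu' := opt_eq rfl hu
            have hw := opt_eq hlastA (getLast?_flatten_sub a i w (by rw [hcase]; rfl))
            rw [hu', hw]
            exact Raa
          | none =>
            rw [hcase, Option.none_or] at hu
            have hu' := opt_eq hlastc hu
            subst hu'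
            exact Raa
      · intro u hu v hv
        have hv' := opt_eq hheadA' (head?_flatten_sub a' j v hv)
        subst hv'
        rw [List.getLast?_append, hlastb, opt_some_or] at hu
        have hu' := opt_eq rfl hu
        subst hu'
        exact Ra'a'
    have hlastW : ∀ u ∈ W.getLast?, u = a'.getD (a'.length - 1) default := by
      intro u hu
      rw [hWdef, List.getLast?_append] at hu
      cases hcase : ((List.replicate j a').flatten).getLast? with
      | some w =>
        rw [hcase, opt_some_or] at hu
        have hu' := opt_eq rfl hu
        have hw := opt_eq hlastA' (getLast?_flatten_sub a' j w (by rw [hcase]; rfl))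
        rw [hu', hw]
      | none =>
        rw [hcase, Option.none_or, List.getLast?_append, hlastb, opt_some_or] at hu
        exact opt_eq rfl hu
    have hheadW : W.head? = some (a'.getD 0 default) := by
      rw [hWdef]
      simp only [List.head?_append, hheadc]
      rfl
    refine perExt_mem_of_chain W hWne ?_
    rw [List.Chain', List.isChain_append]
    refine ⟨hchainW, hchainW, ?_⟩
    intro u hu v hv
    have hv' := opt_eq hheadW hv
    subst hv'
    rw [hlastW u hu]
    exact Ra'a'
  · -- the transition estimate
    intro ε hε
    obtain ⟨R, hR⟩ := unif_key A hA hε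
    refine ⟨2*R + 2, ?_⟩
    intro i hi j hj
    set W := c ++ (List.replicate i a).flatten ++ b ++ (List.replicate j a').flatten with hWdef
    obtain ⟨k, k2, hk1, hk2, hjk⟩ : ∃ k k2 : ℕ, R + 1 ≤ k ∧ R + 1 ≤ k2 ∧ j = k + k2 :=
      ⟨j/2, j - j/2, by omega, by omega, by omega⟩
    obtain ⟨k', k2', hk1', hk2', hik⟩ : ∃ k k2 : ℕ, R + 1 ≤ k ∧ R + 1 ≤ k2 ∧ i = k + k2 :=
      ⟨i/2, i - i/2, by omega, by omega, by omega⟩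
    have hb' : k * a'.length + a'.length + R ≤ j * a'.length := by
      have h1 : R ≤ (k2-1) * a'.length :=
        le_trans (by omega) (Nat.le_mul_of_pos_right _ hla')
      have h2 : j * a'.length = k * a'.length + a'.length + (k2-1)*a'.length := by
        rw [hjk, Nat.add_mul]
        have h3 : k2 * a'.length = a'.length + (k2-1) * a'.length := by
          conv_lhs => rw [show k2 = 1 + (k2-1) by omega]
          rw [Nat.add_mul, one_mul]
        rw [h3]; ring
      rw [h2]
      exact Nat.add_le_add_left h1 _
    have hb : k' * a.length + a.length + R ≤ i * a.length := by
      have h1 : R ≤ (k2'-1) * a.length :=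
        le_trans (by omega) (Nat.le_mul_of_pos_right _ hla)
      have h2 : i * a.length = k' * a.length + a.length + (k2'-1)*a.length := by
        rw [hik, Nat.add_mul]
        have h3 : k2' * a.length = a.length + (k2'-1) * a.length := by
          conv_lhs => rw [show k2' = 1 + (k2'-1) by omega]
          rw [Nat.add_mul, one_mul]
        rw [h3]; ring
      rw [h2]
      exact Nat.add_le_add_left h1 _
    have hkR : R ≤ k * a'.length := le_trans (by omega) (Nat.le_mul_of_pos_right _ hla')
    have hkR' : R ≤ k' * a.length := le_trans (by omega) (Nat.le_mul_of_pos_right _ hla)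
    -- cast versions
    have hb'Z : (k:ℤ) * a'.length + a'.length + R ≤ (j:ℤ) * a'.length := by exact_mod_cast hb'
    have hbZ : (k':ℤ) * a.length + a.length + R ≤ (i:ℤ) * a.length := by exact_mod_cast hb
    have hkRZ : (R:ℤ) ≤ (k:ℤ) * a'.length := by exact_mod_cast hkR
    have hkR'Z : (R:ℤ) ≤ (k':ℤ) * a.length := by exact_mod_cast hkR'
    have hjmul : (j:ℤ) * a'.length = (k:ℤ)*a'.length + (k2:ℤ)*a'.length := by
      have : (j:ℤ) = (k:ℤ) + k2 := by exact_mod_cast hjk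
      rw [this]; ring
    have hWlen : ((W.length : ℕ) : ℤ)
        = (c.length:ℤ) + (i:ℤ)*a.length + (b.length:ℤ) + (j:ℤ)*a'.length := by
      rw [hWdef, lenW]; push_cast; ring
    refine ⟨(k2*a'.length + c.length + k'*a.length) + a.length,
      ((c.length + i*a.length + b.length + k*a'.length : ℕ) : ℤ),
      fun u => if u < a'.length then A (shiftZ (u:ℤ) (perExt a'))
        else if k2*a'.length + c.length + k'*a.length ≤ u then
          A (shiftZ ((u - (k2*a'.length + c.length + k'*a.length) : ℕ) : ℤ) (perExt a))
        else A (shiftZ (((c.length + i*a.length + b.length + k*a'.length : ℕ) : ℤ) + (u:ℤ))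
          (perExt W)),
      ?_, ?_, ?_, ?_, ?_⟩
    · exact Nat.le_add_left _ _
    · exact le_trans (Nat.le_mul_of_pos_left _ (by omega : 0 < k2))
        (le_trans (le_trans (Nat.le_add_right _ _) (Nat.le_add_right _ _)) (Nat.le_add_right _ _))
    · intro s hs
      beta_reduce
      by_cases hs1 : s < a'.length
      · rw [if_pos hs1]
        apply hR
        intro t ht
        have ht' : t ≤ (R:ℤ) ∧ -(R:ℤ) ≤ t := by omega
        have hs1' : (s:ℤ) < (a'.length:ℤ) := by exact_mod_cast hs1
        have hto : (0:ℤ) ≤ (k:ℤ) * a'.length + s + t := by linarith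
        obtain ⟨o, ho⟩ : ∃ o : ℕ, (o:ℤ) = (k:ℤ) * a'.length + s + t :=
          ⟨_, Int.toNat_of_nonneg hto⟩
        have ho2 : o < j * a'.length := by
          have : (o:ℤ) < (j:ℤ) * a'.length := by linarith
          exact_mod_cast this
        show perExt W (t + (((c.length + i*a.length + b.length + k*a'.length : ℕ) : ℤ) + (s:ℤ)))
          = perExt a' (t + (s:ℤ))
        have harg : t + (((c.length + i*a.length + b.length + k*a'.length : ℕ) : ℤ) + (s:ℤ))
            = ((c.length + i*a.length + b.length + o : ℕ) : ℤ) := by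
          push_cast
          linarith
        rw [harg, hWdef, W_right c b a a' i j o ho2]
        have ho3 : (o:ℤ) = (t + (s:ℤ)) + (a'.length:ℤ) * k := by rw [ho]; ring
        have hmod : perExt a' (t + (s:ℤ)) = a'.getD (o % a'.length) default := by
          unfold perExt
          congr 1
          have e1 : (o:ℤ) % (a'.length:ℤ) = (t + (s:ℤ)) % (a'.length:ℤ) := by
            rw [ho3, Int.add_mul_emod_self_left]
          rw [← e1, ← Int.natCast_mod, Int.toNat_natCast]
        exact hmod.symm
      · rw [if_neg hs1]
        by_cases hs2 : k2*a'.length + c.length + k'*a.length ≤ s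
        · rw [if_pos hs2]
          obtain ⟨u, rfl⟩ := Nat.exists_eq_add_of_le hs2
          rw [Nat.add_sub_cancel_left]
          have hu : u < a.length := lt_of_add_lt_add_left hs
          apply hR
          intro t ht
          have ht' : t ≤ (R:ℤ) ∧ -(R:ℤ) ≤ t := by omega
          have huZ : (u:ℤ) < (a.length:ℤ) := by exact_mod_cast hu
          have hto : (0:ℤ) ≤ (k':ℤ) * a.length + u + t := by linarith
          obtain ⟨o, ho⟩ : ∃ o : ℕ, (o:ℤ) = (k':ℤ) * a.length + u + t :=
            ⟨_, Int.toNat_of_nonneg hto⟩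
          have ho2 : o < i * a.length := by
            have : (o:ℤ) < (i:ℤ) * a.length := by linarith
            exact_mod_cast this
          show perExt W (t + (((c.length + i*a.length + b.length + k*a'.length : ℕ) : ℤ)
              + ((k2*a'.length + c.length + k'*a.length + u : ℕ):ℤ)))
            = perExt a (t + (u:ℤ))
          have harg : t + (((c.length + i*a.length + b.length + k*a'.length : ℕ) : ℤ)
              + ((k2*a'.length + c.length + k'*a.length + u : ℕ):ℤ))
              = ((c.length + o : ℕ) : ℤ) + ((W.length : ℕ) : ℤ) := by
            rw [hWlen]
            push_cast
            linarith
          rw [harg, perExt_add_length, hWdef, W_left c b a a' i j o ho2]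
          have ho3 : (o:ℤ) = (t + (u:ℤ)) + (a.length:ℤ) * k' := by rw [ho]; ring
          have hmod : perExt a (t + (u:ℤ)) = a.getD (o % a.length) default := by
            unfold perExt
            congr 1
            have e1 : (o:ℤ) % (a.length:ℤ) = (t + (u:ℤ)) % (a.length:ℤ) := by
              rw [ho3, Int.add_mul_emod_self_left]
            rw [← e1, ← Int.natCast_mod, Int.toNat_natCast]
          exact hmod.symm
        · rw [if_neg hs2, sub_self, norm_zero]
          exact hε
    · intro s hs
      beta_reduce
      rw [if_pos hs]
    · intro s hs
      beta_reduce
      rw [Nat.add_sub_cancel]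
      have h1 : a'.length ≤ k2*a'.length + c.length + k'*a.length :=
        le_trans (Nat.le_mul_of_pos_left _ (by omega : 0 < k2))
          (le_trans (Nat.le_add_right _ _) (Nat.le_add_right _ _))
      rw [if_neg (not_lt.mpr (le_trans h1 (Nat.le_add_right _ _))),
        if_pos (Nat.le_add_right _ _), Nat.add_sub_cancel_left]
end
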